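/- Let f = (V_0, V_1, V_2) be any minimum-weight Roman k-tuple dominating function on a graph G with δ(G) ≥ k−1. Then every vertex of V_0 is adjacent to at most two vertices of V_1. -/

import Mathlib

/-! If a vertex `v ∈ V₀` had three or more neighbours in `V₁`, reassign `v` the value `2` and
those neighbours the value `0`. Every vertex keeps its neighbours in `V₂`, and each demoted
neighbour gains `v` as a new one, so its `k - 1` neighbours in `V₂` become the `k` required of
`V₀`. The weight changes by `2 - |N(v) ∩ V₁| < 0`, contradicting minimality. -/

open Finset

/-- A Roman k-tuple dominating function: values in {0,1,2}; vertices with value 0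
have at least k neighbors with value 2; vertices with nonzero value have at least
k-1 neighbors with value 2. -/
def IsRkTDF {V : Type*} (G : SimpleGraph V) (k : ℕ) (f : V → ℕ) : Prop :=
  (∀ v, f v ≤ 2) ∧
  (∀ v, f v = 0 → k ≤ {w | G.Adj v w ∧ f w = 2}.ncard) ∧
  (∀ v, f v ≠ 0 → k - 1 ≤ {w | G.Adj v w ∧ f w = 2}.ncard)

/-- The Roman k-tuple domination number: minimum weight of a Roman k-tuple
dominating function. -/
noncomputable def romanKTDN {V : Type*} [Fintype V] (G : SimpleGraph V) (k : ℕ) : ℕ :=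
  sInf {n | ∃ f : V → ℕ, IsRkTDF G k f ∧ ∑ v, f v = n}

/-- A k-tuple dominating set: every vertex has at least k members of S in its
closed neighborhood. -/
def IsKTupleDomSet {V : Type*} (G : SimpleGraph V) (k : ℕ) (S : Set V) : Prop :=
  ∀ v, k ≤ {w ∈ S | w = v ∨ G.Adj v w}.ncard

/-- The k-tuple domination number. -/
noncomputable def kTupleDomNum {V : Type*} (G : SimpleGraph V) (k : ℕ) : ℕ :=
  sInf {n | ∃ S : Set V, IsKTupleDomSet G k S ∧ S.ncard = n}

section promoteAt

variable {V : Type*} {G : SimpleGraph V} {k : ℕ}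

open Classical in
noncomputable def promoteAt (G : SimpleGraph V) (f : V → ℕ) (v : V) : V → ℕ := fun w =>
  if w = v then 2 else if G.Adj v w ∧ f w = 1 then 0 else f w

theorem promoteAt_self (f : V → ℕ) (v : V) : promoteAt G f v v = 2 := if_pos rfl

theorem setOf_adj_eq_two_subset_promoteAt (f : V → ℕ) (u v : V) :
    {w | G.Adj u w ∧ f w = 2} ⊆ {w | G.Adj u w ∧ promoteAt G f v w = 2} := by
  rintro w ⟨huw, hw⟩
  refine ⟨huw, ?_⟩
  unfold promoteAt
  split_ifs <;> omega

theorem ncard_adj_eq_two_le_promoteAt [Finite V] (f : V → ℕ) (u v : V) :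
    {w | G.Adj u w ∧ f w = 2}.ncard ≤ {w | G.Adj u w ∧ promoteAt G f v w = 2}.ncard :=
  Set.ncard_le_ncard (setOf_adj_eq_two_subset_promoteAt f u v)

theorem isRkTDF_promoteAt [Finite V] {f : V → ℕ} (hf : IsRkTDF G k f) {v : V}
    (hv : f v = 0) : IsRkTDF G k (promoteAt G f v) := by
  obtain ⟨hle, hzero, hpos⟩ := hf
  refine ⟨fun w => ?_, fun u hu => ?_, fun u hu => ?_⟩
  · unfold promoteAt
    split_ifs
    exacts [le_rfl, zero_le_two, hle w]
  · by_cases hu' : G.Adj v u ∧ f u = 1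
    · have hvu : v ∉ {w | G.Adj u w ∧ f w = 2} := fun h => by have := h.2; omega
      have hsub : insert v {w | G.Adj u w ∧ f w = 2} ⊆
          {w | G.Adj u w ∧ promoteAt G f v w = 2} :=
        Set.insert_subset ⟨hu'.1.symm, promoteAt_self f v⟩
          (setOf_adj_eq_two_subset_promoteAt f u v)
      have hcard := Set.ncard_le_ncard hsub
      rw [Set.ncard_insert_of_notMem hvu] at hcard
      have := hpos u (by omega)
      omega
    · have huv : u ≠ v := by rintro rfl; simp [promoteAt] at hu
      simp only [promoteAt, if_neg huv, if_neg hu'] at hu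
      exact (hzero u hu).trans (ncard_adj_eq_two_le_promoteAt f u v)
  · by_cases huv : u = v
    · subst huv
      exact (Nat.sub_le k 1).trans <| (hzero u hv).trans (ncard_adj_eq_two_le_promoteAt f u u)
    · have hu0 : f u ≠ 0 := by
        intro h
        simp [promoteAt, huv, h] at hu
      exact (hpos u hu0).trans (ncard_adj_eq_two_le_promoteAt f u v)

theorem sum_promoteAt_add_ncard [Fintype V] (f : V → ℕ) {v : V} (hv : f v = 0) :
    ∑ w, promoteAt G f v w + {w | G.Adj v w ∧ f w = 1}.ncard = ∑ w, f w + 2 := by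
  classical
  have hones : {w | G.Adj v w ∧ f w = 1}.ncard =
      ∑ w, if G.Adj v w ∧ f w = 1 then 1 else 0 := by
    rw [Finset.sum_boole, Nat.cast_id, ← Set.ncard_coe_finset]
    simp
  have htwo : (2 : ℕ) = ∑ w, if w = v then 2 else 0 := by simp
  rw [hones, htwo, ← Finset.sum_add_distrib, ← Finset.sum_add_distrib]
  refine Finset.sum_congr rfl fun w _ => ?_
  unfold promoteAt
  by_cases hwv : w = v
  · subst hwv; simp [hv]
  · by_cases hw : G.Adj v w ∧ f w = 1 <;> simp [hwv, hw]

theorem IsRkTDF.romanKTDN_le [Fintype V] {f : V → ℕ} (hf : IsRkTDF G k f) :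
    romanKTDN G k ≤ ∑ v, f v :=
  Nat.sInf_le ⟨f, hf, rfl⟩

end promoteAt

theorem stmt12_general {V : Type*} [Fintype V] (G : SimpleGraph V) (k : ℕ)
    (f : V → ℕ) (hf : IsRkTDF G k f) (hmin : ∑ v, f v = romanKTDN G k) :
    ∀ v : V, f v = 0 → {w | G.Adj v w ∧ f w = 1}.ncard ≤ 2 := by
  intro v hv
  have hweight := sum_promoteAt_add_ncard (G := G) f hv
  have hle := (isRkTDF_promoteAt hf hv).romanKTDN_le
  omega

theorem stmt12 {V : Type*} [Fintype V] (G : SimpleGraph V) (k : ℕ)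
    (hδ : ∀ v : V, k - 1 ≤ (G.neighborSet v).ncard)
    (f : V → ℕ) (hf : IsRkTDF G k f) (hmin : ∑ v, f v = romanKTDN G k) :
    ∀ v : V, f v = 0 → {w | G.Adj v w ∧ f w = 1}.ncard ≤ 2 :=
  stmt12_general G k f hf hmin
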